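/- Let M be a monobrick in a length abelian category A and F(M) = Filt(sub M) the smallest torsion-free class containing M. Then the set of simple objects of F(M) equals the cofinal closure of M. -/

import Mathlib

open CategoryTheory CategoryTheory.Limits

namespace MonobrickPaper

universe v u

variable {A : Type u} [Category.{v} A] [Abelian A]

/-- A set of objects closed under isomorphisms (models a set of iso-classes). -/
def IsoClosedSet (S : Set A) : Prop :=
  ∀ ⦃X Y : A⦄, (X ≅ Y) → X ∈ S → Y ∈ S

/-- A brick: an object whose endomorphism ring is a division ring, phrased as:
nonzero and every nonzero endomorphism is an isomorphism. -/
def IsBrick (X : A) : Prop :=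
  ¬ IsZero X ∧ ∀ f : X ⟶ X, f = 0 ∨ IsIso f

/-- A subcategory (set of objects) closed under extensions (containing the zero objects). -/
def ExtClosed (E : Set A) : Prop :=
  (∀ X : A, IsZero X → X ∈ E) ∧
  ∀ (S : ShortComplex A), S.ShortExact → S.X₁ ∈ E → S.X₃ ∈ E → S.X₂ ∈ E

/-- `M` is a simple object of `E`: nonzero, and admits no short exact sequence
`0 → L → M → N → 0` with `L, N` nonzero objects of `E`. -/
def SimpleIn (E : Set A) (M : A) : Prop :=
  ¬ IsZero M ∧ ∀ ⦃L N : A⦄ (i : L ⟶ M) (p : M ⟶ N) (w : i ≫ p = 0),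
    (ShortComplex.mk i p w).ShortExact → L ∈ E → N ∈ E → IsZero L ∨ IsZero N

/-- The set of simple objects of `E`. -/
def simpSet (E : Set A) : Set A := {X | X ∈ E ∧ SimpleIn E X}

/-- `M` is left Schurian for `E`: nonzero, and every morphism from `M` to an object
of `E` is zero or a monomorphism. -/
def LeftSchurianFor (E : Set A) (M : A) : Prop :=
  ¬ IsZero M ∧ ∀ ⦃X : A⦄, X ∈ E → ∀ f : M ⟶ X, f = 0 ∨ Mono f

/-- A monobrick: an iso-closed set of bricks such that every morphism between its
members is zero or a monomorphism. -/
def IsMonobrick (M : Set A) : Prop :=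
  IsoClosedSet M ∧ (∀ X ∈ M, IsBrick X) ∧
  ∀ ⦃X : A⦄, X ∈ M → ∀ ⦃Y : A⦄, Y ∈ M → ∀ f : X ⟶ Y, f = 0 ∨ Mono f

/-- A semibrick: an iso-closed set of bricks such that every morphism between its
members is zero or an isomorphism. -/
def IsSemibrick (S : Set A) : Prop :=
  IsoClosedSet S ∧ (∀ X ∈ S, IsBrick X) ∧
  ∀ ⦃X : A⦄, X ∈ S → ∀ ⦃Y : A⦄, Y ∈ S → ∀ f : X ⟶ Y, f = 0 ∨ IsIso f

/-- Membership in the extension closure `Filt C`: objects admitting a finite filtration with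
subquotients in `C`, generated by objects isomorphic to members of `C`, zero objects, and
extensions. -/
inductive FiltMem (C : Set A) : A → Prop
  | of_iso {X Y : A} (h : Y ∈ C) (e : X ≅ Y) : FiltMem C X
  | of_isZero {X : A} (h : IsZero X) : FiltMem C X
  | of_extension {S : ShortComplex A} (hS : S.ShortExact)
      (h1 : FiltMem C S.X₁) (h3 : FiltMem C S.X₃) : FiltMem C S.X₂

/-- The extension closure of `C`. -/
def Filt (C : Set A) : Set A := {X | FiltMem C X}

/-- A left Schur subcategory: extension-closed (and iso-closed), and every simple object
is left Schurian. -/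
def IsLeftSchur (E : Set A) : Prop :=
  IsoClosedSet E ∧ ExtClosed E ∧ ∀ M ∈ E, SimpleIn E M → LeftSchurianFor E M

/-- A torsion-free class: closed under extensions and subobjects. -/
def IsTorsionFreeClass (F : Set A) : Prop :=
  IsoClosedSet F ∧ ExtClosed F ∧
  ∀ ⦃X Y : A⦄ (f : X ⟶ Y), Mono f → Y ∈ F → X ∈ F

/-- A wide subcategory: closed under extensions, kernels and cokernels. -/
def IsWide (W : Set A) : Prop :=
  IsoClosedSet W ∧ ExtClosed W ∧
  (∀ ⦃X Y : A⦄ (f : X ⟶ Y), X ∈ W → Y ∈ W → kernel f ∈ W) ∧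
  (∀ ⦃X Y : A⦄ (f : X ⟶ Y), X ∈ W → Y ∈ W → cokernel f ∈ W)

/-- The submodule order: `X ≤ Y` iff there is a monomorphism `X ↪ Y`. -/
def subOrder (X Y : A) : Prop := ∃ f : X ⟶ Y, Mono f

/-- The set of maximal elements of `M` with respect to the submodule order
(maximality up to isomorphism of iso-classes). -/
def maxSet (M : Set A) : Set A :=
  {X | X ∈ M ∧ ∀ Y ∈ M, subOrder X Y → subOrder Y X}

/-- `N` is a cofinal extension of the monobrick `M`. -/
def IsCofinalExt (M N : Set A) : Prop :=
  IsMonobrick N ∧ M ⊆ N ∧ ∀ X ∈ N, ∃ Y ∈ M, subOrder X Y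

/-- A cofinally closed monobrick: no cofinal extension other than itself. -/
def IsCofinallyClosed (M : Set A) : Prop :=
  IsMonobrick M ∧ ∀ N : Set A, IsCofinalExt M N → N = M

/-- The cofinal closure of `M`: the union of all cofinal extensions of `M`. -/
def cofClosure (M : Set A) : Set A :=
  {X | ∃ N : Set A, IsCofinalExt M N ∧ X ∈ N}

/-- All subobjects of objects of `C`. -/
def subClosure (C : Set A) : Set A := {X | ∃ Y ∈ C, subOrder X Y}



section Aux

lemma subOrder_refl (X : A) : subOrder X X := ⟨𝟙 X, inferInstance⟩

lemma subOrder_trans {X Y Z : A} (h1 : subOrder X Y) (h2 : subOrder Y Z) : subOrder X Z := by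
  obtain ⟨f, hf⟩ := h1
  obtain ⟨g, hg⟩ := h2
  haveI := hf; haveI := hg
  exact ⟨f ≫ g, inferInstance⟩

lemma subClosure_sub {M : Set A} {X W : A} (hX : X ∈ subClosure M) (w : W ⟶ X) (hw : Mono w) :
    W ∈ subClosure M := by
  obtain ⟨Y, hY, hs⟩ := hX
  exact ⟨Y, hY, subOrder_trans ⟨w, hw⟩ hs⟩

lemma shortExact_middle_iso {S : ShortComplex A} (hS : S.ShortExact) {X : A} (e : X ≅ S.X₂) :
    (ShortComplex.mk (S.f ≫ e.inv) (e.hom ≫ S.g)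
      (by rw [Category.assoc, Iso.inv_hom_id_assoc, S.zero])).ShortExact := by
  refine ShortComplex.shortExact_of_iso ?_ hS
  exact ShortComplex.isoMk (Iso.refl _) e.symm (Iso.refl _) (by simp) (by simp)

lemma FiltMem.iso {C : Set A} {X : A} (h : FiltMem C X) : ∀ {Y : A}, (X ≅ Y) → FiltMem C Y := by
  induction h with
  | of_iso h e' => exact fun e => .of_iso h (e.symm ≪≫ e')
  | of_isZero h => exact fun e => .of_isZero (h.of_iso e.symm)
  | of_extension hS h1 h3 _ _ =>
      exact fun e => .of_extension (shortExact_middle_iso hS e.symm) h1 h3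

lemma ses_ker {X Y : A} (f : X ⟶ Y) :
    (ShortComplex.mk (kernel.ι f) (cokernel.π (kernel.ι f))
      (cokernel.condition _)).ShortExact := by
  constructor
  exact ShortComplex.exact_of_g_is_cokernel _ (cokernelIsCokernel (kernel.ι f))

lemma filt_sub {C : Set A} (hC : ∀ ⦃X W : A⦄ (w : W ⟶ X), Mono w → X ∈ C → W ∈ C)
    {X : A} (h : FiltMem C X) : ∀ {W : A} (w : W ⟶ X), Mono w → FiltMem C W := by
  induction h with
  | of_iso h e =>
    intro W w hw
    haveI := hw
    exact .of_iso (hC (w ≫ e.hom) inferInstance h) (Iso.refl _)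
  | of_isZero h =>
    intro W w hw
    haveI := hw
    exact .of_isZero (IsZero.of_mono_eq_zero w (h.eq_of_tgt w 0))
  | @of_extension S hS h1 h3 ih1 ih3 =>
    intro W w hw
    haveI := hw
    haveI := hS.mono_f
    set g : W ⟶ S.X₃ := w ≫ S.g with hg
    have hcomp : (kernel.ι g ≫ w) ≫ S.g = 0 := by
      rw [Category.assoc, ← hg, kernel.condition]
    obtain ⟨k, hk⟩ := KernelFork.IsLimit.lift' hS.fIsKernel (kernel.ι g ≫ w) hcomp
    have hk' : k ≫ S.f = kernel.ι g ≫ w := hk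
    have hmk : Mono k := by
      have hmono : Mono (k ≫ S.f) := by
        rw [hk']; exact inferInstance
      exact mono_of_mono k S.f
    have h1' : FiltMem C (kernel g) := ih1 k hmk
    have h3' : FiltMem C (Abelian.coimage g) :=
      ih3 (Abelian.factorThruCoimage g) inferInstance
    exact .of_extension (ses_ker g) h1' h3'

lemma monobrick_schurian {M : Set A} (hM : IsMonobrick M) {X : A} (hX : X ∈ M) :
    ∀ {Z : A}, FiltMem (subClosure M) Z → ∀ f : X ⟶ Z, f = 0 ∨ Mono f := by
  intro Z hZ
  induction hZ with
  | of_iso h e =>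
    intro f
    obtain ⟨Y, hY, m, hm⟩ := h
    haveI := hm
    rcases hM.2.2 hX hY (f ≫ e.hom ≫ m) with h0 | hmono
    · left
      have : f ≫ (e.hom ≫ m) = (0 : X ⟶ _) ≫ (e.hom ≫ m) := by
        rw [zero_comp, ← Category.assoc]
        simpa using h0
      exact (cancel_mono (e.hom ≫ m)).1 this
    · right
      haveI : Mono (f ≫ e.hom ≫ m) := hmono
      exact mono_of_mono f (e.hom ≫ m)
  | of_isZero h =>
    intro f
    exact Or.inl (h.eq_of_tgt f 0)
  | @of_extension S hS h1 h3 ih1 ih3 =>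
    intro f
    haveI := hS.mono_f
    rcases ih3 (f ≫ S.g) with h0 | hmono
    · obtain ⟨l, hl⟩ := KernelFork.IsLimit.lift' hS.fIsKernel f h0
      have hl' : l ≫ S.f = f := hl
      rcases ih1 l with hl0 | hlm
      · left; rw [← hl', hl0, zero_comp]
      · right; rw [← hl']; haveI := hlm; exact inferInstance
    · right
      haveI := hmono
      exact mono_of_mono f S.g

lemma simpleIn_of_schurian {E : Set A} {X : A} (hnz : ¬ IsZero X)
    (hsch : ∀ ⦃Z : A⦄, Z ∈ E → ∀ f : X ⟶ Z, f = 0 ∨ Mono f) : SimpleIn E X := by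
  refine ⟨hnz, fun L N i p w hse hL hN => ?_⟩
  haveI := hse.mono_f
  haveI := hse.epi_g
  rcases hsch hN p with h0 | hm
  · right
    exact IsZero.of_epi_eq_zero p h0
  · left
    haveI := hm
    have hi : i = 0 := by
      have : i ≫ p = (0 : L ⟶ X) ≫ p := by rw [w, zero_comp]
      exact (cancel_mono p).1 this
    exact IsZero.of_mono_eq_zero i hi

lemma simpleIn_iso {E : Set A} {X Y : A} (h : SimpleIn E X) (e : X ≅ Y) : SimpleIn E Y := by
  refine ⟨fun hz => h.1 (hz.of_iso e), ?_⟩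
  intro L N i p w hse hL hN
  have w' : (i ≫ e.inv) ≫ (e.hom ≫ p) = 0 := by
    rw [Category.assoc, Iso.inv_hom_id_assoc, w]
  exact h.2 (i ≫ e.inv) (e.hom ≫ p) w' (shortExact_middle_iso hse e) hL hN

lemma simple_mem_subClosure {M : Set A} {X : A} (h : FiltMem (subClosure M) X) :
    SimpleIn (Filt (subClosure M)) X → X ∈ subClosure M := by
  induction h with
  | of_iso h e =>
    intro _
    exact subClosure_sub h e.hom inferInstance
  | of_isZero h =>
    intro hs
    exact absurd h hs.1
  | @of_extension S hS h1 h3 ih1 ih3 =>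
    intro hs
    haveI := hS.mono_f
    haveI := hS.epi_g
    rcases hs.2 S.f S.g S.zero hS h1 h3 with hz1 | hz3
    · have hf0 : S.f = 0 := hz1.eq_of_src S.f 0
      haveI : Mono S.g := hS.exact.mono_g hf0
      haveI : IsIso S.g := isIso_of_mono_of_epi S.g
      have h3' := ih3 (simpleIn_iso hs (asIso S.g))
      exact subClosure_sub h3' S.g inferInstance
    · have hg0 : S.g = 0 := hz3.eq_of_tgt S.g 0
      haveI : Epi S.f := hS.exact.epi_f hg0
      haveI : IsIso S.f := isIso_of_mono_of_epi S.f
      have h1' := ih1 (simpleIn_iso hs (asIso S.f).symm)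
      exact subClosure_sub h1' (asIso S.f).symm.hom inferInstance

lemma isIso_of_mono_endo {X : A} [IsArtinianObject X] (f : X ⟶ X) (hf : Mono f) : IsIso f := by
  haveI := hf
  let pow : ℕ → (X ⟶ X) := fun n => Nat.rec (𝟙 X) (fun _ g => f ≫ g) n
  have hm : ∀ n, Mono (pow n) := fun n =>
    Nat.rec (motive := fun n => Mono (pow n)) (show Mono (𝟙 X) from inferInstance)
      (fun n ih => show Mono (f ≫ pow n) from @mono_comp _ _ _ _ _ f ‹Mono f› (pow n) ih) n
  let s : ℕ → Subobject X := fun n => @Subobject.mk _ _ _ _ (pow n) (hm n)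
  have hstep : ∀ n, s (n + 1) ≤ s n := by
    intro n
    exact @Subobject.mk_le_mk_of_comm _ _ _ _ _ (pow (n + 1)) (pow n) (hm (n + 1)) (hm n) f rfl
  obtain ⟨m, ⟨n, rfl⟩, hmin⟩ :=
    (wellFounded_lt (α := Subobject X)).has_min (Set.range s) ⟨s 0, ⟨0, rfl⟩⟩
  have heq : s (n + 1) = s n :=
    ((hstep n).lt_or_eq).resolve_left (hmin _ ⟨n + 1, rfl⟩)
  have hle : s n ≤ s (n + 1) := le_of_eq heq.symm
  let e : X ⟶ X := @Subobject.ofMkLEMk _ _ _ _ _ (pow n) (pow (n + 1)) (hm n) (hm (n + 1)) hle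
  have he : e ≫ pow (n + 1) = pow n :=
    @Subobject.ofMkLEMk_comp _ _ _ _ _ (pow n) (pow (n + 1)) (hm n) (hm (n + 1)) hle
  have hef : e ≫ f = 𝟙 X := by
    have : (e ≫ f) ≫ pow n = 𝟙 X ≫ pow n := by
      rw [Category.assoc, Category.id_comp]
      exact he
    exact (@cancel_mono _ _ _ _ _ (pow n) (hm n)).1 this
  haveI hsep : IsSplitEpi f := IsSplitEpi.mk' ⟨e, hef⟩
  haveI hep : Epi f := hsep.epi
  exact @isIso_of_mono_of_epi _ _ _ _ _ f hf hep

lemma simple_schurian {M : Set A} [∀ X : A, IsArtinianObject X] {X : A}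
    (hX : FiltMem (subClosure M) X) (hs : SimpleIn (Filt (subClosure M)) X)
    {Z : A} (hZ : FiltMem (subClosure M) Z) (f : X ⟶ Z) : f = 0 ∨ Mono f := by
  have hCsub : ∀ ⦃Y W : A⦄ (w : W ⟶ Y), Mono w → Y ∈ subClosure M → W ∈ subClosure M :=
    fun Y W w hw hY => subClosure_sub hY w hw
  have hK : FiltMem (subClosure M) (kernel f) := filt_sub hCsub hX (kernel.ι f) inferInstance
  have hQ : FiltMem (subClosure M) (Abelian.coimage f) :=
    filt_sub hCsub hZ (Abelian.factorThruCoimage f) inferInstance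
  rcases hs.2 (kernel.ι f) (cokernel.π (kernel.ι f)) (cokernel.condition _) (ses_ker f) hK hQ
    with hz | hz
  · right
    exact Preadditive.mono_of_kernel_zero (hz.eq_of_src _ 0)
  · left
    have : f = Abelian.coimage.π f ≫ Abelian.factorThruCoimage f := (Abelian.coimage.fac f).symm
    rw [this, hz.eq_of_src (Abelian.factorThruCoimage f) 0, comp_zero]

end Aux

theorem statement10 [∀ X : A, IsNoetherianObject X] [∀ X : A, IsArtinianObject X] (M : Set A) (hM : IsMonobrick M) :
    simpSet (Filt (subClosure M)) = cofClosure M := by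
  have hCsub : ∀ ⦃Y W : A⦄ (w : W ⟶ Y), Mono w → Y ∈ subClosure M → W ∈ subClosure M :=
    fun Y W w hw hY => subClosure_sub hY w hw
  have hMF : ∀ X ∈ M, X ∈ Filt (subClosure M) := fun X hX =>
    .of_iso (⟨X, hX, subOrder_refl X⟩ : X ∈ subClosure M) (Iso.refl X)
  have hMsimp : M ⊆ simpSet (Filt (subClosure M)) := by
    intro X hX
    refine ⟨hMF X hX, simpleIn_of_schurian (hM.2.1 X hX).1 ?_⟩
    intro Z hZ f
    exact monobrick_schurian hM hX hZ f
  ext X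
  constructor
  · rintro ⟨hXF, hXs⟩
    refine ⟨simpSet (Filt (subClosure M)), ⟨?_, hMsimp, ?_⟩, ⟨hXF, hXs⟩⟩
    · refine ⟨?_, ?_, ?_⟩
      · rintro Y Z e ⟨hYF, hYs⟩
        exact ⟨FiltMem.iso hYF e, simpleIn_iso hYs e⟩
      · rintro Y ⟨hYF, hYs⟩
        refine ⟨hYs.1, fun f => ?_⟩
        rcases simple_schurian hYF hYs hYF f with h0 | hmono
        · exact Or.inl h0
        · exact Or.inr (isIso_of_mono_endo f hmono)
      · rintro Y ⟨hYF, hYs⟩ Z ⟨hZF, hZs⟩ f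
        exact simple_schurian hYF hYs hZF f
    · rintro Y ⟨hYF, hYs⟩
      obtain ⟨Z, hZ, hsub⟩ := simple_mem_subClosure hYF hYs
      exact ⟨Z, hZ, hsub⟩
  · rintro ⟨N, ⟨hNmono, hMN, hcof⟩, hXN⟩
    have hsub_eq : subClosure N = subClosure M := by
      ext Z
      constructor
      · rintro ⟨Y, hYN, hZY⟩
        obtain ⟨Y', hY', hYY'⟩ := hcof Y hYN
        exact ⟨Y', hY', subOrder_trans hZY hYY'⟩
      · rintro ⟨Y, hYM, hZY⟩
        exact ⟨Y, hMN hYM, hZY⟩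
    have hXsub : X ∈ subClosure M := by
      rw [← hsub_eq]
      exact ⟨X, hXN, subOrder_refl X⟩
    refine ⟨FiltMem.of_iso hXsub (Iso.refl X), ?_⟩
    refine simpleIn_of_schurian (hNmono.2.1 X hXN).1 ?_
    intro Z hZ f
    have hZ' : FiltMem (subClosure N) Z := by rw [hsub_eq]; exact hZ
    exact monobrick_schurian hNmono hXN hZ' f


end MonobrickPaper
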